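/- arXiv:1610.01357 — 2 statements merged into one kernel-verified Lean document; each statement's English description precedes it below -/
import Mathlib

section
/- For p > 1, equality q_p(G) = δ(G) holds if and only if G has an isolated vertex, and equality λ_p(G) = Δ(G) holds if and only if G has no edges. -/
open Finset

variable {V : Type*}

/-- Signless p-Laplacian form: `Q_p(x) = Σ_{{i,j}∈E} |x_i + x_j|^p`. -/
noncomputable def Qp [Fintype V] (G : SimpleGraph V) [Fintype G.edgeSet] (p : ℝ)
    (x : V → ℝ) : ℝ :=
  ∑ e ∈ G.edgeFinset,
    Sym2.lift ⟨fun i j => |x i + x j| ^ p, fun i j => by simp [add_comm]⟩ e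

/-- The p-norm unit sphere condition. -/
def unitSphere [Fintype V] (p : ℝ) (x : V → ℝ) : Prop := ∑ i, |x i| ^ p = 1

/-- Smallest signless p-Laplacian eigenvalue. -/
noncomputable def qp [Fintype V] (G : SimpleGraph V) [Fintype G.edgeSet] (p : ℝ) : ℝ :=
  sInf {r | ∃ x : V → ℝ, unitSphere p x ∧ Qp G p x = r}

/-- Largest signless p-Laplacian eigenvalue. -/
noncomputable def lamp [Fintype V] (G : SimpleGraph V) [Fintype G.edgeSet] (p : ℝ) : ℝ :=
  sSup {r | ∃ x : V → ℝ, unitSphere p x ∧ Qp G p x = r}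

open Classical in
/-- Number of edges with both endpoints in `S`. -/
noncomputable def eIn [Fintype V] (G : SimpleGraph V) [Fintype G.edgeSet] (S : Finset V) : ℕ :=
  (G.edgeFinset.filter fun e => ∀ v ∈ e, v ∈ S).card

open Classical in
/-- Number of edges with exactly one endpoint in `U`. -/
noncomputable def cutN [Fintype V] (G : SimpleGraph V) [Fintype G.edgeSet] (U : Finset V) : ℕ :=
  (G.edgeFinset.filter fun e => (∃ v ∈ e, v ∈ U) ∧ (∃ w ∈ e, w ∉ U)).card

/-- Desai–Rao bipartiteness parameter ψ(G). -/
noncomputable def psi [Fintype V] [DecidableEq V] (G : SimpleGraph V) [Fintype G.edgeSet] : ℝ :=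
  sInf {r | ∃ S T : Finset V, Disjoint S T ∧ (S ∪ T).Nonempty ∧
    r = (2 * eIn G S + 2 * eIn G T + cutN G (S ∪ T)) / (S ∪ T).card}

open Classical in
/-- `h_g(U)`: min over thresholds `0 ≤ t < max g` of `cut(C_t)/|C_t|` where `C_t = {i : g i > t}`. -/
noncomputable def hgC [Fintype V] [DecidableEq V] (G : SimpleGraph V) [Fintype G.edgeSet]
    (g : V → ℝ) : ℝ :=
  sInf {r | ∃ t : ℝ, 0 ≤ t ∧ t < sSup (Set.range g) ∧
    r = (cutN G (univ.filter fun i => t < g i) : ℝ) / (univ.filter fun i => t < g i).card}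

/-- Eigenpair of the signless p-Laplacian. -/
def IsEigenpair [Fintype V] (G : SimpleGraph V) [DecidableRel G.Adj] (p : ℝ)
    (x : V → ℝ) (μ : ℝ) : Prop :=
  ∀ k, ∑ j ∈ G.neighborFinset k, Real.sign (x k + x j) * |x k + x j| ^ (p - 1)
      = μ * (Real.sign (x k) * |x k| ^ (p - 1))

/-- Vertex bipartiteness: minimum number of vertices to delete to make `G` bipartite. -/
noncomputable def nuG [Fintype V] [DecidableEq V] (G : SimpleGraph V) : ℕ :=
  sInf {k | ∃ S : Finset V, S.card = k ∧ ((SimpleGraph.induce ((↑S : Set V)ᶜ) G).Colorable 2)}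

lemma Qp_nonneg [Fintype V] (G : SimpleGraph V) [Fintype G.edgeSet] (p : ℝ) (x : V → ℝ) :
    0 ≤ Qp G p x := by
  unfold Qp
  apply Finset.sum_nonneg
  intro e _
  induction e using Sym2.ind with
  | _ u v =>
    simp only [Sym2.lift_mk]
    positivity

lemma sphere_single [Fintype V] [DecidableEq V] (p : ℝ) (hp : p ≠ 0) (i : V) :
    unitSphere p (fun k => if k = i then (1:ℝ) else 0) := by
  unfold unitSphere
  rw [Fintype.sum_eq_single i (by intro k hk; simp [hk, Real.zero_rpow hp])]
  simp

lemma sphere_pair [Fintype V] [DecidableEq V] (p : ℝ) (hp : p ≠ 0) {i j : V} (hij : i ≠ j)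
    (a b : ℝ) (h : |a| ^ p + |b| ^ p = 1) :
    unitSphere p (fun k => if k = i then a else if k = j then b else 0) := by
  unfold unitSphere
  rw [← Finset.sum_subset (Finset.subset_univ {i, j}) ?_]
  · rw [Finset.sum_pair hij]
    simpa [hij.symm] using h
  · intro k _ hk
    simp only [Finset.mem_insert, Finset.mem_singleton] at hk
    push_neg at hk
    simp [hk.1, hk.2, Real.zero_rpow hp]

lemma Qp_bddAbove [Fintype V] (G : SimpleGraph V) [Fintype G.edgeSet] (p : ℝ) (hp : 0 < p) :
    BddAbove {r | ∃ x : V → ℝ, unitSphere p x ∧ Qp G p x = r} := by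
  refine ⟨(G.edgeFinset.card : ℝ) * 2 ^ p, ?_⟩
  rintro r ⟨x, hx, rfl⟩
  unfold unitSphere at hx
  have hxle : ∀ k, |x k| ≤ 1 := by
    intro k
    by_contra hgt; push_neg at hgt
    have h1 : (1:ℝ) < |x k| ^ p := by
      have := Real.rpow_lt_rpow (by norm_num) hgt hp
      rwa [Real.one_rpow] at this
    have h2 : |x k| ^ p ≤ ∑ i, |x i| ^ p :=
      Finset.single_le_sum (fun i _ => Real.rpow_nonneg (abs_nonneg _) p) (Finset.mem_univ k)
    rw [hx] at h2
    linarith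
  unfold Qp
  calc (∑ e ∈ G.edgeFinset,
      Sym2.lift ⟨fun i j => |x i + x j| ^ p, fun i j => by simp [add_comm]⟩ e)
      ≤ ∑ _e ∈ G.edgeFinset, (2:ℝ) ^ p := by
        apply Finset.sum_le_sum
        intro e _
        induction e using Sym2.ind with
        | _ u v =>
          simp only [Sym2.lift_mk]
          have h3 : |x u + x v| ≤ 2 := (abs_add_le _ _).trans (by linarith [hxle u, hxle v])
          exact Real.rpow_le_rpow (abs_nonneg _) h3 hp.le
    _ = (G.edgeFinset.card : ℝ) * 2 ^ p := by rw [Finset.sum_const, nsmul_eq_mul]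

lemma edge_eq_of_mem {i j : V} {e : Sym2 V} (hi : i ∈ e) (hj : j ∈ e) (hij : i ≠ j) :
    e = s(i, j) := by
  induction e using Sym2.ind with
  | _ u v =>
    rw [Sym2.mem_iff] at hi hj
    rcases hi with rfl | rfl <;> rcases hj with rfl | rfl
    · exact absurd rfl hij
    · rfl
    · exact Sym2.eq_swap
    · exact absurd rfl hij

lemma Qp_single [Fintype V] [DecidableEq V] (G : SimpleGraph V) [DecidableRel G.Adj]
    [Fintype G.edgeSet] (p : ℝ) (hp : p ≠ 0) (i : V) (a : ℝ) :
    Qp G p (fun k => if k = i then a else 0) = (G.degree i : ℝ) * |a| ^ p := by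
  classical
  unfold Qp
  rw [← Finset.sum_filter_add_sum_filter_not G.edgeFinset (fun e => i ∈ e)]
  have hcard : (G.edgeFinset.filter (fun e => i ∈ e)).card = G.degree i := by
    rw [← SimpleGraph.card_incidenceFinset_eq_degree, SimpleGraph.incidenceFinset_eq_filter]
  have h1 : ∀ e ∈ G.edgeFinset.filter (fun e => i ∈ e),
      Sym2.lift ⟨fun u v => |(if u = i then a else 0) + (if v = i then a else 0)| ^ p,
        fun u v => by simp [add_comm]⟩ e = |a| ^ p := by
    intro e he
    rw [Finset.mem_filter] at he
    obtain ⟨he, hie⟩ := he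
    induction e using Sym2.ind with
    | _ u v =>
      have hadj : G.Adj u v := by rwa [SimpleGraph.mem_edgeFinset, SimpleGraph.mem_edgeSet] at he
      rw [Sym2.mem_iff] at hie
      simp only [Sym2.lift_mk]
      rcases hie with rfl | rfl
      · rw [if_pos rfl, if_neg (fun h : v = i => hadj.ne' h)]
        simp
      · rw [if_pos rfl, if_neg (fun h : u = i => hadj.ne h)]
        simp
  have h2 : ∀ e ∈ G.edgeFinset.filter (fun e => ¬ i ∈ e),
      Sym2.lift ⟨fun u v => |(if u = i then a else 0) + (if v = i then a else 0)| ^ p,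
        fun u v => by simp [add_comm]⟩ e = 0 := by
    intro e he
    rw [Finset.mem_filter] at he
    obtain ⟨_, hie⟩ := he
    induction e using Sym2.ind with
    | _ u v =>
      rw [Sym2.mem_iff] at hie
      push_neg at hie
      simp only [Sym2.lift_mk]
      rw [if_neg (fun h : u = i => hie.1 h.symm), if_neg (fun h : v = i => hie.2 h.symm)]
      simp [Real.zero_rpow hp]
  rw [Finset.sum_congr rfl h1, Finset.sum_congr rfl h2, Finset.sum_const, Finset.sum_const,
    hcard, nsmul_eq_mul, smul_zero, add_zero]

lemma Qp_pair [Fintype V] [DecidableEq V] (G : SimpleGraph V) [DecidableRel G.Adj]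
    [Fintype G.edgeSet] (p : ℝ) (hp : p ≠ 0) {i j : V} (hadj : G.Adj i j) (a b : ℝ) :
    ∃ A B : ℕ, A + 1 = G.degree i ∧ B + 1 = G.degree j ∧
      Qp G p (fun k => if k = i then a else if k = j then b else 0)
        = A * |a| ^ p + B * |b| ^ p + |a + b| ^ p := by
  classical
  have hij : i ≠ j := hadj.ne
  set f : Sym2 V → ℝ :=
    Sym2.lift ⟨fun u v => |(if u = i then a else if u = j then b else 0)
        + (if v = i then a else if v = j then b else 0)| ^ p,
      fun u v => by simp [add_comm]⟩ with hf
  have hone : G.edgeFinset.filter (fun e => i ∈ e ∧ j ∈ e) = {s(i, j)} := by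
    ext e
    simp only [Finset.mem_filter, Finset.mem_singleton]
    constructor
    · rintro ⟨he, hie, hje⟩
      exact edge_eq_of_mem hie hje hij
    · rintro rfl
      refine ⟨SimpleGraph.mem_edgeFinset.mpr ((SimpleGraph.mem_edgeSet G).mpr hadj), ?_, ?_⟩ <;> simp
  refine ⟨(G.edgeFinset.filter (fun e => i ∈ e ∧ j ∉ e)).card,
          (G.edgeFinset.filter (fun e => i ∉ e ∧ j ∈ e)).card, ?_, ?_, ?_⟩
  · have := Finset.card_filter_add_card_filter_not
      (s := G.edgeFinset.filter (fun e => i ∈ e)) (p := fun e => j ∈ e)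
    rw [Finset.filter_filter, Finset.filter_filter, hone] at this
    have hcard : (G.edgeFinset.filter (fun e => i ∈ e)).card = G.degree i := by
      rw [← SimpleGraph.card_incidenceFinset_eq_degree, SimpleGraph.incidenceFinset_eq_filter]
    rw [hcard] at this
    simp only [Finset.card_singleton] at this
    omega
  · have := Finset.card_filter_add_card_filter_not
      (s := G.edgeFinset.filter (fun e => j ∈ e)) (p := fun e => i ∈ e)
    have hone' : G.edgeFinset.filter (fun e => j ∈ e ∧ i ∈ e) = {s(i, j)} := by
      rw [← hone]; ext e; simp only [Finset.mem_filter]; tauto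
    have hBset : G.edgeFinset.filter (fun e => j ∈ e ∧ ¬ i ∈ e)
        = G.edgeFinset.filter (fun e => i ∉ e ∧ j ∈ e) := by
      ext e; simp only [Finset.mem_filter]; tauto
    rw [Finset.filter_filter, Finset.filter_filter, hone', hBset] at this
    have hcard : (G.edgeFinset.filter (fun e => j ∈ e)).card = G.degree j := by
      rw [← SimpleGraph.card_incidenceFinset_eq_degree, SimpleGraph.incidenceFinset_eq_filter]
    rw [hcard] at this
    simp only [Finset.card_singleton] at this
    omega
  · show ∑ e ∈ G.edgeFinset, f e = _
    have hsplit : ∑ e ∈ G.edgeFinset, f e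
        = ∑ e ∈ G.edgeFinset.filter (fun e => i ∈ e ∧ j ∈ e), f e
        + ∑ e ∈ G.edgeFinset.filter (fun e => i ∈ e ∧ ¬ j ∈ e), f e
        + (∑ e ∈ G.edgeFinset.filter (fun e => ¬ i ∈ e ∧ j ∈ e), f e
        + ∑ e ∈ G.edgeFinset.filter (fun e => ¬ i ∈ e ∧ ¬ j ∈ e), f e) := by
      rw [← Finset.sum_filter_add_sum_filter_not G.edgeFinset (fun e => i ∈ e) f,
        ← Finset.sum_filter_add_sum_filter_not (G.edgeFinset.filter (fun e => i ∈ e))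
          (fun e => j ∈ e) f,
        ← Finset.sum_filter_add_sum_filter_not (G.edgeFinset.filter (fun e => ¬ i ∈ e))
          (fun e => j ∈ e) f,
        Finset.filter_filter, Finset.filter_filter, Finset.filter_filter, Finset.filter_filter]
    have hS1 : ∑ e ∈ G.edgeFinset.filter (fun e => i ∈ e ∧ j ∈ e), f e = |a + b| ^ p := by
      rw [hone, Finset.sum_singleton, hf]
      simp [Sym2.lift_mk, hij.symm]
    have hS2 : ∀ e ∈ G.edgeFinset.filter (fun e => i ∈ e ∧ ¬ j ∈ e), f e = |a| ^ p := by
      intro e he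
      rw [Finset.mem_filter] at he
      obtain ⟨he, hie, hje⟩ := he
      induction e using Sym2.ind with
      | _ u v =>
        have hadj' : G.Adj u v := by
          rwa [SimpleGraph.mem_edgeFinset, SimpleGraph.mem_edgeSet] at he
        rw [Sym2.mem_iff] at hie hje
        push_neg at hje
        simp only [hf, Sym2.lift_mk]
        rcases hie with rfl | rfl
        · rw [if_pos rfl, if_neg (fun h : v = i => hadj'.ne' h),
            if_neg (fun h : v = j => hje.2 h.symm)]
          simp
        · rw [if_pos rfl, if_neg (fun h : u = i => hadj'.ne h),
            if_neg (fun h : u = j => hje.1 h.symm)]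
          simp
    have hS3 : ∀ e ∈ G.edgeFinset.filter (fun e => ¬ i ∈ e ∧ j ∈ e), f e = |b| ^ p := by
      intro e he
      rw [Finset.mem_filter] at he
      obtain ⟨he, hie, hje⟩ := he
      induction e using Sym2.ind with
      | _ u v =>
        have hadj' : G.Adj u v := by
          rwa [SimpleGraph.mem_edgeFinset, SimpleGraph.mem_edgeSet] at he
        rw [Sym2.mem_iff] at hie hje
        push_neg at hie
        simp only [hf, Sym2.lift_mk]
        rcases hje with rfl | rfl
        · rw [if_neg (fun h : j = i => hij h.symm), if_pos rfl,
            if_neg (fun h : v = i => hie.2 h.symm), if_neg (fun h : v = j => hadj'.ne' h)]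
          simp
        · rw [if_neg (fun h : j = i => hij h.symm), if_pos rfl,
            if_neg (fun h : u = i => hie.1 h.symm), if_neg (fun h : u = j => hadj'.ne h)]
          simp
    have hS4 : ∀ e ∈ G.edgeFinset.filter (fun e => ¬ i ∈ e ∧ ¬ j ∈ e), f e = 0 := by
      intro e he
      rw [Finset.mem_filter] at he
      obtain ⟨_, hie, hje⟩ := he
      induction e using Sym2.ind with
      | _ u v =>
        rw [Sym2.mem_iff] at hie hje
        push_neg at hie hje
        simp only [hf, Sym2.lift_mk]
        rw [if_neg (fun h : u = i => hie.1 h.symm), if_neg (fun h : u = j => hje.1 h.symm),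
          if_neg (fun h : v = i => hie.2 h.symm), if_neg (fun h : v = j => hje.2 h.symm)]
        simp [Real.zero_rpow hp]
    rw [hsplit, hS1, Finset.sum_congr rfl hS2, Finset.sum_congr rfl hS3,
      Finset.sum_eq_zero hS4, Finset.sum_const, Finset.sum_const, nsmul_eq_mul, nsmul_eq_mul,
      add_zero]
    ring

lemma key_ab (p : ℝ) (hp : 1 < p) (N : ℕ) :
    ∃ a b : ℝ, 0 < b ∧ b < 1/2 ∧ 1/2 ≤ a ∧ a ≤ 1 ∧ a ^ p = 1 - b ^ p ∧
      (N : ℝ) * b ^ p < b ∧ (a - b) ^ p ≤ 1 - b ∧ 1 + (N : ℝ) * b ^ p < (a + b) ^ p := by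
  have hp0 : (0:ℝ) < p := by linarith
  have hq0 : (0:ℝ) < p - 1 := by linarith
  set c : ℝ := ((2 * ((N:ℝ) + 1))⁻¹) ^ (p - 1)⁻¹ with hc
  have hbase_pos : (0:ℝ) < (2 * ((N:ℝ) + 1))⁻¹ := by positivity
  have hbase_lt : (2 * ((N:ℝ) + 1))⁻¹ < 1 := by
    rw [inv_lt_one_iff₀]
    right
    have : (0:ℝ) ≤ (N:ℝ) := Nat.cast_nonneg N
    linarith
  have hc_pos : 0 < c := Real.rpow_pos_of_pos hbase_pos _
  set b := c / 2 with hb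
  have hb0 : 0 < b := by positivity
  have hc_lt : c < 1 := Real.rpow_lt_one hbase_pos.le hbase_lt (by positivity)
  have hbh : b < 1/2 := by rw [hb]; linarith
  have hcq : c ^ (p - 1) = (2 * ((N:ℝ) + 1))⁻¹ :=
    Real.rpow_inv_rpow hbase_pos.le hq0.ne'
  have hbq : b ^ (p - 1) = (1/2:ℝ) ^ (p - 1) * (2 * ((N:ℝ) + 1))⁻¹ := by
    have hbb : b = (1/2) * c := by rw [hb]; ring
    rw [hbb, Real.mul_rpow (by norm_num) hc_pos.le, hcq]
  have hhq : (0:ℝ) < (1/2:ℝ) ^ (p - 1) := Real.rpow_pos_of_pos (by norm_num) _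
  have hkey : ((N:ℝ) + 1) * b ^ (p - 1) < (1/2:ℝ) ^ (p - 1) := by
    have h3 : ((N:ℝ) + 1) * (2 * ((N:ℝ) + 1))⁻¹ = 1/2 := by
      have : ((N:ℝ) + 1) ≠ 0 := by positivity
      field_simp
    calc ((N:ℝ) + 1) * b ^ (p - 1)
        = (1/2:ℝ) ^ (p - 1) * (((N:ℝ) + 1) * (2 * ((N:ℝ) + 1))⁻¹) := by rw [hbq]; ring
      _ = (1/2:ℝ) ^ (p - 1) * (1/2) := by rw [h3]
      _ < (1/2:ℝ) ^ (p - 1) := by linarith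
  have hhalfq_le : ((1:ℝ)/2) ^ (p - 1) ≤ 1 := Real.rpow_le_one (by norm_num) (by norm_num) hq0.le
  have hbqnn : (0:ℝ) ≤ b ^ (p - 1) := Real.rpow_nonneg hb0.le _
  have hbqN : (N:ℝ) * b ^ (p - 1) < 1 := by nlinarith
  have hbq_lt1 : b ^ (p - 1) < 1 := by nlinarith
  have hbp_eq : b ^ p = b ^ (p - 1) * b := by
    rw [show p = (p - 1) + 1 by ring, Real.rpow_add hb0, Real.rpow_one]
    ring_nf
  have hNb : (N:ℝ) * b ^ p < b := by
    rw [hbp_eq]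
    calc (N:ℝ) * (b ^ (p - 1) * b) = ((N:ℝ) * b ^ (p - 1)) * b := by ring
      _ < 1 * b := mul_lt_mul_of_pos_right hbqN hb0
      _ = b := one_mul b
  have hbp_le_b : b ^ p ≤ b := by rw [hbp_eq]; nlinarith
  have hbp_pos : 0 < b ^ p := Real.rpow_pos_of_pos hb0 _
  have hbp_lt_half : b ^ p < 1/2 := lt_of_le_of_lt hbp_le_b hbh
  set a : ℝ := (1 - b ^ p) ^ p⁻¹ with ha
  have h1bp : (0:ℝ) < 1 - b ^ p := by linarith
  have hap : a ^ p = 1 - b ^ p := Real.rpow_inv_rpow h1bp.le hp0.ne'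
  have ha_pos : 0 < a := Real.rpow_pos_of_pos h1bp _
  have ha1 : a ≤ 1 := Real.rpow_le_one h1bp.le (by linarith) (by positivity)
  have hhalf_le_a : 1/2 ≤ a := by
    by_contra h; push_neg at h
    have h1 : a ^ p ≤ (1/2:ℝ) ^ p := Real.rpow_le_rpow ha_pos.le h.le hp0.le
    have h2 : ((1:ℝ)/2) ^ p ≤ 1/2 := by
      calc ((1:ℝ)/2) ^ p ≤ (1/2:ℝ) ^ (1:ℝ) :=
            Real.rpow_le_rpow_of_exponent_ge (by norm_num) (by norm_num) hp.le
        _ = 1/2 := Real.rpow_one _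
    linarith [hap]
  refine ⟨a, b, hb0, hbh, hhalf_le_a, ha1, hap, hNb, ?_, ?_⟩
  · have h0 : (0:ℝ) ≤ a - b := by linarith
    have h1 : (a - b) ^ p ≤ (1 - b) ^ p := Real.rpow_le_rpow h0 (by linarith) hp0.le
    have h2 : (1 - b) ^ p ≤ (1 - b) ^ (1:ℝ) :=
      Real.rpow_le_rpow_of_exponent_ge (by linarith) (by linarith) hp.le
    rw [Real.rpow_one] at h2
    linarith
  · have habpos : (0:ℝ) < a + b := by linarith
    have e1 : (a + b) ^ p = (a + b) ^ (p - 1) * (a + b) := by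
      rw [show p = (p - 1) + 1 by ring, Real.rpow_add habpos, Real.rpow_one]
      ring_nf
    have e2 : a ^ (p - 1) ≤ (a + b) ^ (p - 1) := Real.rpow_le_rpow ha_pos.le (by linarith) hq0.le
    have e3 : a ^ (p - 1) * a = a ^ p := by
      rw [show p = (p - 1) + 1 by ring, Real.rpow_add ha_pos, Real.rpow_one]
      ring_nf
    have e4 : (1/2:ℝ) ^ (p - 1) ≤ a ^ (p - 1) := Real.rpow_le_rpow (by norm_num) hhalf_le_a hq0.le
    have e5 : ((N:ℝ) + 1) * b ^ p < a ^ (p - 1) * b := by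
      rw [hbp_eq]
      have h5 := mul_lt_mul_of_pos_right hkey hb0
      have h6 : (1/2:ℝ) ^ (p - 1) * b ≤ a ^ (p - 1) * b := mul_le_mul_of_nonneg_right e4 hb0.le
      nlinarith
    have e6 : a ^ p + a ^ (p - 1) * b ≤ (a + b) ^ p := by
      rw [e1]
      calc a ^ p + a ^ (p - 1) * b = a ^ (p - 1) * (a + b) := by rw [← e3]; ring
        _ ≤ (a + b) ^ (p - 1) * (a + b) := mul_le_mul_of_nonneg_right e2 habpos.le
    rw [hap] at e6
    linarith

theorem stmt_10 [Fintype V] [DecidableEq V] [Nonempty V] (G : SimpleGraph V)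
    [DecidableRel G.Adj] (p : ℝ) (hp : 1 < p) :
    (qp G p = (G.minDegree : ℝ) ↔ ∃ i : V, G.degree i = 0) ∧
    (lamp G p = (G.maxDegree : ℝ) ↔ G.edgeFinset = ∅) := by
  have hp0 : (0:ℝ) < p := by linarith
  have hp' : p ≠ 0 := hp0.ne'
  set S : Set ℝ := {r | ∃ x : V → ℝ, unitSphere p x ∧ Qp G p x = r} with hS
  obtain ⟨i0⟩ := (inferInstance : Nonempty V)
  have hmem : ∀ x : V → ℝ, unitSphere p x → Qp G p x ∈ S := fun x hx => ⟨x, hx, rfl⟩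
  have hSne : S.Nonempty := ⟨_, hmem _ (sphere_single p hp' i0)⟩
  have hbb : BddBelow S := ⟨0, by rintro r ⟨x, hx, rfl⟩; exact Qp_nonneg G p x⟩
  have hba : BddAbove S := Qp_bddAbove G p hp0
  have hqp : qp G p = sInf S := rfl
  have hlamp : lamp G p = sSup S := rfl
  constructor
  · constructor
    · intro h
      by_contra hno
      push_neg at hno
      obtain ⟨i, hi⟩ := G.exists_minimal_degree_vertex
      have hdi : 0 < G.degree i := Nat.pos_of_ne_zero (hno i)
      obtain ⟨j, hadj⟩ := (G.degree_pos_iff_exists_adj i).mp hdi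
      obtain ⟨a, b, hb0, hbh, hha, ha1, hap, hNb, habp, hsum⟩ := key_ab p hp G.maxDegree
      have habs_a : |a| = a := abs_of_nonneg (by linarith)
      have habs_b : |(-b)| = b := by rw [abs_neg]; exact abs_of_nonneg hb0.le
      have hsph : unitSphere p (fun k => if k = i then a else if k = j then -b else 0) := by
        apply sphere_pair p hp' hadj.ne
        rw [habs_a, habs_b, hap]; ring
      obtain ⟨A, B, hA, hB, hQ⟩ := Qp_pair G p hp' hadj a (-b)
      rw [habs_a, habs_b] at hQ
      have habs3 : |a + -b| = a - b := by
        rw [abs_of_nonneg (by linarith : (0:ℝ) ≤ a + -b)]; ring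
      rw [habs3] at hQ
      have hBle : (B:ℝ) + 1 ≤ (G.maxDegree : ℝ) := by
        exact_mod_cast hB ▸ G.degree_le_maxDegree j
      have hbpnn : (0:ℝ) ≤ b ^ p := Real.rpow_nonneg hb0.le p
      have hAnn : (0:ℝ) ≤ (A:ℝ) := Nat.cast_nonneg A
      have hlt : Qp G p (fun k => if k = i then a else if k = j then -b else 0)
          < (A:ℝ) + 1 := by
        rw [hQ, hap]
        have t1 : (B:ℝ) * b ^ p ≤ (G.maxDegree:ℝ) * b ^ p :=
          mul_le_mul_of_nonneg_right (by linarith) hbpnn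
        nlinarith [mul_nonneg hAnn hbpnn]
      have hle : qp G p ≤ Qp G p (fun k => if k = i then a else if k = j then -b else 0) := by
        rw [hqp]; exact csInf_le hbb (hmem _ hsph)
      have hcast : ((G.minDegree : ℝ)) = (A:ℝ) + 1 := by
        rw [hi]; exact_mod_cast hA.symm
      rw [h, hcast] at hle
      linarith
    · rintro ⟨i, hi⟩
      have hmd : G.minDegree = 0 := Nat.le_zero.mp (hi ▸ G.minDegree_le_degree i)
      have hq0' : Qp G p (fun k => if k = i then (1:ℝ) else 0) = 0 := by
        rw [Qp_single G p hp' i 1, hi]; simp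
      have h1 : qp G p ≤ 0 := by
        rw [hqp]
        have := csInf_le hbb (hmem _ (sphere_single p hp' i))
        rwa [hq0'] at this
      have h2 : 0 ≤ qp G p := by
        rw [hqp]
        apply le_csInf hSne
        rintro r ⟨x, hx, rfl⟩
        exact Qp_nonneg G p x
      rw [hmd]
      push_cast
      linarith
  · constructor
    · intro h
      by_contra hne
      obtain ⟨e, he⟩ := Finset.nonempty_iff_ne_empty.mpr hne
      obtain ⟨i, hi⟩ := G.exists_maximal_degree_vertex
      have hΔ1 : 0 < G.degree i := by
        induction e using Sym2.ind with
        | _ u v =>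
          have hadj : G.Adj u v := by
            rwa [SimpleGraph.mem_edgeFinset, SimpleGraph.mem_edgeSet] at he
          have h1 : 0 < G.degree u := (G.degree_pos_iff_exists_adj u).mpr ⟨v, hadj⟩
          have h2 := G.degree_le_maxDegree u
          omega
      obtain ⟨j, hadj⟩ := (G.degree_pos_iff_exists_adj i).mp hΔ1
      obtain ⟨a, b, hb0, hbh, hha, ha1, hap, hNb, habp, hsum⟩ := key_ab p hp G.maxDegree
      have habs_a : |a| = a := abs_of_nonneg (by linarith)
      have habs_b : |b| = b := abs_of_nonneg hb0.le
      have habs3 : |a + b| = a + b := abs_of_nonneg (by linarith)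
      have hsph : unitSphere p (fun k => if k = i then a else if k = j then b else 0) := by
        apply sphere_pair p hp' hadj.ne
        rw [habs_a, habs_b, hap]; ring
      obtain ⟨A, B, hA, hB, hQ⟩ := Qp_pair G p hp' hadj a b
      rw [habs_a, habs_b, habs3] at hQ
      have hAc : (A:ℝ) + 1 = (G.maxDegree:ℝ) := by
        rw [hi]; exact_mod_cast hA
      have hbpnn : (0:ℝ) ≤ b ^ p := Real.rpow_nonneg hb0.le p
      have hBnn : (0:ℝ) ≤ (B:ℝ) * b ^ p := mul_nonneg (Nat.cast_nonneg B) hbpnn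
      have hgt : (G.maxDegree:ℝ)
          < Qp G p (fun k => if k = i then a else if k = j then b else 0) := by
        rw [hQ, hap]
        have hmul : ((A:ℝ) + 1) * b ^ p = (G.maxDegree:ℝ) * b ^ p := by rw [hAc]
        nlinarith
      have hge : Qp G p (fun k => if k = i then a else if k = j then b else 0) ≤ lamp G p := by
        rw [hlamp]; exact le_csSup hba (hmem _ hsph)
      rw [h] at hge
      linarith
    · intro h
      have hdeg : ∀ v, G.degree v = 0 := by
        intro v
        by_contra hv
        obtain ⟨w, hw⟩ := (G.degree_pos_iff_exists_adj v).mp (Nat.pos_of_ne_zero hv)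
        have hmem' : s(v, w) ∈ G.edgeFinset :=
          SimpleGraph.mem_edgeFinset.mpr ((SimpleGraph.mem_edgeSet G).mpr hw)
        rw [h] at hmem'
        exact absurd hmem' (Finset.notMem_empty _)
      have hmax : G.maxDegree = 0 :=
        Nat.le_zero.mp (G.maxDegree_le_of_forall_degree_le 0 (fun v => (hdeg v).le))
      have hQ0 : ∀ x : V → ℝ, Qp G p x = 0 := by
        intro x; unfold Qp; rw [h]; simp
      have h1 : lamp G p ≤ 0 := by
        rw [hlamp]
        apply csSup_le hSne
        rintro r ⟨x, hx, rfl⟩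
        exact (hQ0 x).le
      have h2 : 0 ≤ lamp G p := by
        rw [hlamp]
        have := le_csSup hba (hmem _ (sphere_single p hp' i0))
        rwa [hQ0] at this
      rw [hmax]
      push_cast
      linarith
end

section
/- For p > 1 and G connected with m edges, n vertices, minimum degree δ and maximum degree Δ: 2^{p-1}·δ ≤ 2^{p-1}·(2m/n) ≤ λ_p(G) ≤ 2^{p-1}·Δ, with equality anywhere if and only if G is regular. -/
open Finset

variable {V : Type*}

/-!
Each edge term obeys `|a + b| ^ p ≤ 2 ^ (p - 1) * (|a| ^ p + |b| ^ p)`, strictly unless `a = b`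
(strict convexity of `t ↦ t ^ p`). Summed over the edges this gives
`Q_p(x) ≤ 2 ^ (p - 1) * Σ_v deg v * |x v| ^ p ≤ 2 ^ (p - 1) * Δ` on the unit sphere, while the
constant vector attains `2 ^ (p - 1) * 2m / n`.

If `λ_p = 2 ^ (p - 1) * Δ`, a maximiser (it exists by compactness) takes equal values at the ends
of every edge, hence is constant as `G` is connected, so `λ_p = 2 ^ (p - 1) * 2m / n`. In that
case the constant vector maximises `Q_p(x) - λ_p * Σ_v |x v| ^ p`, and differentiating in the
direction of a vertex `k` gives `2 ^ (p - 1) * deg k = λ_p`: every degree equals `2m / n`.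
-/

section ScalarInequality

variable {p : ℝ}

theorem abs_add_rpow_le (hp : 1 ≤ p) (a b : ℝ) :
    |a + b| ^ p ≤ 2 ^ (p - 1) * (|a| ^ p + |b| ^ p) :=
  calc |a + b| ^ p ≤ (|a| + |b|) ^ p := by gcongr; exact abs_add_le a b
    _ ≤ 2 ^ (p - 1) * (|a| ^ p + |b| ^ p) := by
      exact_mod_cast NNReal.rpow_add_le_mul_rpow_add_rpow (Real.nnabs a) (Real.nnabs b) hp

theorem add_rpow_lt_of_ne (hp : 1 < p) {u v : ℝ} (hu : 0 ≤ u) (hv : 0 ≤ v) (huv : u ≠ v) :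
    (u + v) ^ p < 2 ^ (p - 1) * (u ^ p + v ^ p) := by
  have hmid := (strictConvexOn_rpow hp).2 hu hv huv (by norm_num : (0 : ℝ) < 1 / 2)
    (by norm_num : (0 : ℝ) < 1 / 2) (by norm_num)
  simp only [smul_eq_mul] at hmid
  calc (u + v) ^ p = 2 ^ p * (1 / 2 * u + 1 / 2 * v) ^ p := by
        rw [← Real.mul_rpow (by norm_num) (by positivity)]; ring_nf
    _ < 2 ^ p * (1 / 2 * u ^ p + 1 / 2 * v ^ p) := by gcongr
    _ = 2 ^ (p - 1) * (u ^ p + v ^ p) := by rw [Real.rpow_sub_one two_ne_zero]; ring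

theorem abs_add_rpow_lt (hp : 1 < p) {a b : ℝ} (hab : a ≠ b) :
    |a + b| ^ p < 2 ^ (p - 1) * (|a| ^ p + |b| ^ p) := by
  rcases eq_or_ne |a| |b| with habs | habs
  · have hb : b = -a := by
      rcases abs_eq_abs.1 habs with h | h
      · exact absurd h hab
      · linarith
    have ha : a ≠ 0 := by rintro rfl; simp_all
    rw [hb, add_neg_cancel, abs_zero, Real.zero_rpow (by positivity)]
    positivity
  · calc |a + b| ^ p ≤ (|a| + |b|) ^ p := by gcongr; exact abs_add_le a b
      _ < 2 ^ (p - 1) * (|a| ^ p + |b| ^ p) :=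
        add_rpow_lt_of_ne hp (abs_nonneg a) (abs_nonneg b) habs

theorem hasDerivAt_abs_add_mul_rpow (hp : 1 ≤ p) {a : ℝ} (ha : 0 < a) (b : ℝ) :
    HasDerivAt (fun ε => |a + ε * b| ^ p) (p * a ^ (p - 1) * b) 0 := by
  have hlin : HasDerivAt (fun ε : ℝ => a + ε * b) b 0 := by
    simpa using ((hasDerivAt_id (0 : ℝ)).mul_const b).const_add a
  have hpos : ∀ᶠ ε in nhds (0 : ℝ), 0 < a + ε * b :=
    hlin.continuousAt.eventually (eventually_gt_nhds (by simpa using ha))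
  refine ((hlin.rpow_const (Or.inr hp)).congr_of_eventuallyEq
    (hpos.mono fun ε hε => by simp only [abs_of_pos hε])).congr_deriv ?_
  simp only [zero_mul, add_zero]; ring

end ScalarInequality

theorem SimpleGraph.Reachable.apply_eq_of_forall_adj {α : Type*} {G : SimpleGraph V}
    {f : V → α} (hf : ∀ ⦃u v⦄, G.Adj u v → f u = f v) {u v : V} (h : G.Reachable u v) :
    f u = f v := by
  obtain ⟨w⟩ := h
  induction w with
  | nil => rfl
  | cons hadj _ ih => exact (hf hadj).trans ih

section Graph

variable [Fintype V] (G : SimpleGraph V) [DecidableRel G.Adj] {p : ℝ}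

theorem sum_edgeFinset_lift_add (f : V → ℝ) :
    ∑ e ∈ G.edgeFinset, Sym2.lift ⟨fun i j => f i + f j, fun _ _ => add_comm _ _⟩ e
      = ∑ v, G.degree v * f v := by
  classical
  have hedge : ∀ e ∈ G.edgeFinset,
      Sym2.lift ⟨fun i j => f i + f j, fun _ _ => add_comm _ _⟩ e
        = ∑ v, if v ∈ e then f v else 0 := by
    intro e he
    induction e with
    | _ i j =>
      have hij : i ≠ j := G.ne_of_adj (G.mem_edgeFinset.1 he)
      rw [← Finset.sum_filter, show univ.filter (· ∈ s(i, j)) = {i, j} by ext; simp,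
        Finset.sum_pair hij, Sym2.lift_mk]
  rw [Finset.sum_congr rfl hedge, Finset.sum_comm]
  refine Finset.sum_congr rfl fun v _ => ?_
  rw [← Finset.sum_filter, Finset.sum_const, ← G.incidenceFinset_eq_filter,
    G.card_incidenceFinset_eq_degree, nsmul_eq_mul]

theorem Qp_le_two_rpow_mul_sum_degree_mul (hp : 1 ≤ p) (x : V → ℝ) :
    Qp G p x ≤ 2 ^ (p - 1) * ∑ v, G.degree v * |x v| ^ p := by
  rw [← sum_edgeFinset_lift_add G, Finset.mul_sum]
  refine Finset.sum_le_sum fun e _ => ?_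
  induction e with
  | _ i j => exact abs_add_rpow_le hp (x i) (x j)

theorem eq_of_adj_of_Qp_eq (hp : 1 < p) {x : V → ℝ}
    (h : Qp G p x = 2 ^ (p - 1) * ∑ v, G.degree v * |x v| ^ p) ⦃i j : V⦄ (hij : G.Adj i j) :
    x i = x j := by
  by_contra hne
  refine h.not_lt ?_
  rw [← sum_edgeFinset_lift_add G, Finset.mul_sum]
  refine Finset.sum_lt_sum (fun e _ => ?_) ⟨s(i, j), G.mem_edgeFinset.2 hij, ?_⟩
  · induction e with
    | _ i j => exact abs_add_rpow_le hp.le (x i) (x j)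
  · exact abs_add_rpow_lt hp hne

theorem Qp_const (c : ℝ) :
    Qp G p (fun _ => c) = 2 ^ (p - 1) * (2 * #G.edgeFinset) * |c| ^ p := by
  have hedge : |c + c| ^ p = 2 ^ (p - 1) * 2 * |c| ^ p := by
    rw [← two_mul, abs_mul, Real.mul_rpow (by norm_num) (abs_nonneg c), abs_two,
      Real.rpow_sub_one two_ne_zero]
    ring
  rw [Qp, Finset.sum_congr rfl (g := fun _ => 2 ^ (p - 1) * 2 * |c| ^ p) fun e _ => ?_,
    Finset.sum_const, nsmul_eq_mul]
  · ring
  · induction e with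
    | _ i j => exact hedge

theorem Qp_smul (t : ℝ) (x : V → ℝ) : Qp G p (t • x) = |t| ^ p * Qp G p x := by
  rw [Qp, Qp, Finset.mul_sum]
  refine Finset.sum_congr rfl fun e _ => ?_
  induction e with
  | _ i j =>
    simp only [Sym2.lift_mk, Pi.smul_apply, smul_eq_mul, ← mul_add, abs_mul]
    exact Real.mul_rpow (abs_nonneg _) (abs_nonneg _)

theorem continuous_Qp (hp : 0 < p) : Continuous (Qp G p) := by
  refine continuous_finsetSum _ fun e _ => ?_
  induction e with
  | _ i j =>
    exact ((continuous_apply i).add (continuous_apply j)).abs.rpow_const fun _ => Or.inr hp.le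

end Graph

namespace SimpleGraph

variable [Fintype V] (G : SimpleGraph V) [DecidableRel G.Adj]

theorem card_mul_minDegree_le_two_mul_card_edgeFinset :
    Fintype.card V * G.minDegree ≤ 2 * #G.edgeFinset := by
  rw [← G.sum_degrees_eq_twice_card_edges, ← smul_eq_mul, ← Finset.card_univ]
  exact Finset.card_nsmul_le_sum _ _ _ fun v _ => G.minDegree_le_degree v

theorem isRegularOfDegree_minDegree_of_card_mul_eq
    (h : Fintype.card V * G.minDegree = 2 * #G.edgeFinset) :
    G.IsRegularOfDegree G.minDegree := by
  rw [← G.sum_degrees_eq_twice_card_edges, ← smul_eq_mul, ← Finset.card_univ,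
    ← Finset.sum_const] at h
  exact fun v =>
    ((Finset.sum_eq_sum_iff_of_le fun v _ => G.minDegree_le_degree v).1 h v (mem_univ v)).symm

variable [Nonempty V]

theorem minDegree_le_average :
    (G.minDegree : ℝ) ≤ 2 * #G.edgeFinset / Fintype.card V := by
  rw [le_div_iff₀ (by positivity), mul_comm]
  exact_mod_cast G.card_mul_minDegree_le_two_mul_card_edgeFinset

theorem minDegree_eq_average_iff :
    (G.minDegree : ℝ) = 2 * #G.edgeFinset / Fintype.card V ↔ ∃ d, G.IsRegularOfDegree d := by
  rw [eq_div_iff (by positivity), mul_comm]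
  norm_cast
  refine ⟨fun h => ⟨_, G.isRegularOfDegree_minDegree_of_card_mul_eq h⟩, ?_⟩
  rintro ⟨d, hd⟩
  rw [← G.sum_degrees_eq_twice_card_edges, hd.minDegree_eq,
    Finset.sum_congr rfl fun v _ => hd.degree_eq v, Finset.sum_const, Finset.card_univ,
    smul_eq_mul]

theorem minDegree_eq_average_of_forall_degree_eq
    (h : ∀ v, (G.degree v : ℝ) = 2 * #G.edgeFinset / Fintype.card V) :
    (G.minDegree : ℝ) = 2 * #G.edgeFinset / Fintype.card V := by
  obtain ⟨v, hv⟩ := G.exists_minimal_degree_vertex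
  rw [hv, h v]

end SimpleGraph

section Sphere

variable [Fintype V] {p : ℝ}

theorem sum_abs_smul_rpow (t : ℝ) (x : V → ℝ) :
    ∑ v, |(t • x) v| ^ p = |t| ^ p * ∑ v, |x v| ^ p := by
  rw [Finset.mul_sum]
  refine Finset.sum_congr rfl fun v _ => ?_
  rw [Pi.smul_apply, smul_eq_mul, abs_mul, Real.mul_rpow (abs_nonneg _) (abs_nonneg _)]

theorem abs_inv_rpow_inv_rpow (hp : p ≠ 0) {N : ℝ} (hN : 0 < N) :
    |(N ^ p⁻¹)⁻¹| ^ p = N⁻¹ := by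
  rw [abs_of_pos (by positivity), Real.inv_rpow (by positivity), Real.rpow_inv_rpow hN.le hp]

theorem unitSphere_normalize (hp : p ≠ 0) {x : V → ℝ} (hx : 0 < ∑ v, |x v| ^ p) :
    unitSphere p (((∑ v, |x v| ^ p) ^ p⁻¹)⁻¹ • x) := by
  rw [unitSphere, sum_abs_smul_rpow, abs_inv_rpow_inv_rpow hp hx, inv_mul_cancel₀ hx.ne']

theorem isCompact_unitSphere (hp : 0 < p) : IsCompact {x : V → ℝ | unitSphere p x} := by
  refine (isCompact_univ_pi fun _ => isCompact_Icc (a := -1) (b := 1)).of_isClosed_subset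
    (isClosed_eq (continuous_finsetSum _ fun i _ =>
      (continuous_apply i).abs.rpow_const fun _ => Or.inr hp.le) continuous_const) ?_
  intro x hx i _
  rw [Set.mem_Icc, ← abs_le]
  by_contra! hi
  have hle : |x i| ^ p ≤ 1 :=
    hx ▸ Finset.single_le_sum (f := fun j => |x j| ^ p) (fun j _ => by positivity) (mem_univ i)
  exact (Real.one_lt_rpow hi hp).not_ge hle

variable (G : SimpleGraph V) [DecidableRel G.Adj]

theorem sum_degree_mul_le_maxDegree {x : V → ℝ} (hx : unitSphere p x) :
    ∑ v, G.degree v * |x v| ^ p ≤ G.maxDegree := by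
  calc ∑ v, G.degree v * |x v| ^ p ≤ ∑ v, G.maxDegree * |x v| ^ p := by
        gcongr with v; exact_mod_cast G.degree_le_maxDegree v
    _ = G.maxDegree := by rw [← Finset.mul_sum, hx, mul_one]

variable [Nonempty V]

theorem isGreatest_lamp (hp : 0 < p) :
    IsGreatest {r | ∃ x, unitSphere p x ∧ Qp G p x = r} (lamp G p) := by
  have hone : 0 < ∑ _v : V, |(1 : ℝ)| ^ p := by simpa using Fintype.card_pos
  obtain ⟨z, hz, hmax⟩ := (isCompact_unitSphere hp).exists_isMaxOn
    ⟨_, unitSphere_normalize hp.ne' hone⟩ (continuous_Qp G hp).continuousOn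
  have hgreatest : IsGreatest {r | ∃ x, unitSphere p x ∧ Qp G p x = r} (Qp G p z) :=
    ⟨⟨z, hz, rfl⟩, by rintro _ ⟨y, hy, rfl⟩; exact hmax hy⟩
  rwa [lamp, hgreatest.csSup_eq]

theorem Qp_le_lamp_mul (hp : 0 < p) (x : V → ℝ) : Qp G p x ≤ lamp G p * ∑ v, |x v| ^ p := by
  rcases (Finset.sum_nonneg fun v _ => by positivity : 0 ≤ ∑ v, |x v| ^ p).eq_or_lt with hN | hN
  · have hx : x = fun _ => 0 := by
      funext v
      have := (Finset.sum_eq_zero_iff_of_nonneg fun v _ => by positivity).1 hN.symm v (mem_univ v)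
      simpa [Real.rpow_eq_zero_iff_of_nonneg, hp.ne'] using this
    rw [← hN, hx, Qp_const, abs_zero, Real.zero_rpow hp.ne', mul_zero, mul_zero]
  · have hle := (isGreatest_lamp G hp).2 ⟨_, unitSphere_normalize hp.ne' hN, rfl⟩
    rwa [Qp_smul, abs_inv_rpow_inv_rpow hp.ne' hN, inv_mul_le_iff₀ hN, mul_comm] at hle

end Sphere

section Bounds

variable [Fintype V] (G : SimpleGraph V) [DecidableRel G.Adj] {p : ℝ}

theorem hasDerivAt_Qp_const_add_mul (hp : 1 ≤ p) {c : ℝ} (hc : 0 < c) (y : V → ℝ) :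
    HasDerivAt (fun ε => Qp G p fun v => c + ε * y v)
      (p * (2 * c) ^ (p - 1) * ∑ v, G.degree v * y v) 0 := by
  rw [← sum_edgeFinset_lift_add G, Finset.mul_sum]
  refine HasDerivAt.fun_sum fun e _ => ?_
  induction e with
  | _ i j =>
    refine (hasDerivAt_abs_add_mul_rpow hp (by positivity : 0 < 2 * c) (y i + y j))
      |>.congr_of_eventuallyEq (.of_forall fun ε => ?_)
    simp only [Sym2.lift_mk]
    ring_nf

theorem hasDerivAt_sum_abs_const_add_mul_rpow (hp : 1 ≤ p) {c : ℝ} (hc : 0 < c)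
    (y : V → ℝ) :
    HasDerivAt (fun ε => ∑ v, |c + ε * y v| ^ p) (p * c ^ (p - 1) * ∑ v, y v) 0 := by
  rw [Finset.mul_sum]
  exact HasDerivAt.fun_sum fun v _ => hasDerivAt_abs_add_mul_rpow hp hc (y v)

variable [Nonempty V]

theorem lamp_le_two_rpow_mul_maxDegree (hp : 1 ≤ p) : lamp G p ≤ 2 ^ (p - 1) * G.maxDegree := by
  obtain ⟨z, hz, hQ⟩ := (isGreatest_lamp G (zero_lt_one.trans_le hp)).1
  rw [← hQ]
  exact (Qp_le_two_rpow_mul_sum_degree_mul G hp z).trans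
    (by gcongr; exact sum_degree_mul_le_maxDegree G hz)

theorem two_rpow_mul_average_le_lamp (hp : 0 < p) :
    2 ^ (p - 1) * (2 * #G.edgeFinset / Fintype.card V) ≤ lamp G p := by
  have h := Qp_le_lamp_mul G hp fun _ => 1
  simp only [Qp_const, abs_one, Real.one_rpow, mul_one, Finset.sum_const, Finset.card_univ,
    nsmul_eq_mul] at h
  rwa [mul_div_assoc', div_le_iff₀ (by positivity)]

theorem lamp_eq_average_of_lamp_eq_maxDegree (hp : 1 < p) (hG : G.Connected)
    (h : lamp G p = 2 ^ (p - 1) * G.maxDegree) :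
    lamp G p = 2 ^ (p - 1) * (2 * #G.edgeFinset / Fintype.card V) := by
  obtain ⟨z, hz, hQ⟩ := (isGreatest_lamp G (zero_lt_one.trans hp)).1
  have hQW := Qp_le_two_rpow_mul_sum_degree_mul G hp.le z
  have hWΔ : 2 ^ (p - 1) * ∑ v, G.degree v * |z v| ^ p ≤ 2 ^ (p - 1) * G.maxDegree := by
    gcongr; exact sum_degree_mul_le_maxDegree G hz
  have hQeq : Qp G p z = 2 ^ (p - 1) * ∑ v, G.degree v * |z v| ^ p := by linarith
  have hadj := eq_of_adj_of_Qp_eq G hp hQeq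
  obtain ⟨w⟩ := hG.nonempty
  have hconst : z = fun _ => z w :=
    funext fun v => (hG.preconnected v w).apply_eq_of_forall_adj hadj
  have hunit : |z w| ^ p = (Fintype.card V : ℝ)⁻¹ := by
    rw [hconst, unitSphere] at hz
    exact eq_inv_of_mul_eq_one_right (by simpa using hz)
  rw [← hQ, hconst, Qp_const, hunit, div_eq_mul_inv]
  ring

theorem degree_eq_average_of_lamp_eq (hp : 1 < p)
    (h : 2 ^ (p - 1) * (2 * #G.edgeFinset / Fintype.card V) = lamp G p) (k : V) :
    (G.degree k : ℝ) = 2 * #G.edgeFinset / Fintype.card V := by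
  classical
  set y : V → ℝ := fun v => if v = k then 1 else 0
  set φ : ℝ → ℝ := fun ε =>
    Qp G p (fun v => 1 + ε * y v) - lamp G p * ∑ v, |1 + ε * y v| ^ p
  have hφ : HasDerivAt φ (p * 2 ^ (p - 1) * G.degree k - lamp G p * p) 0 := by
    refine ((hasDerivAt_Qp_const_add_mul G hp.le one_pos y).sub
      ((hasDerivAt_sum_abs_const_add_mul_rpow hp.le one_pos y).const_mul (lamp G p))).congr_deriv ?_
    simp [y]
  have hφ0 : φ 0 = 0 := by
    simp only [φ, zero_mul, add_zero, Qp_const, abs_one, Real.one_rpow, mul_one,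
      Finset.sum_const, Finset.card_univ, nsmul_eq_mul, ← h]
    field_simp
    ring
  have hmax : IsLocalMax φ 0 := Filter.Eventually.of_forall fun ε => by
    rw [hφ0]
    exact sub_nonpos.2 (Qp_le_lamp_mul G (by linarith) _)
  have hcrit := hmax.hasDerivAt_eq_zero hφ
  rw [← h] at hcrit
  exact mul_left_cancel₀ (by positivity : p * 2 ^ (p - 1) ≠ 0) (by linarith)

end Bounds

theorem stmt_15_general [Fintype V] (G : SimpleGraph V) [DecidableRel G.Adj]
    (hc : G.Connected) (p : ℝ) (hp : 1 < p) :
    ((2 : ℝ) ^ (p - 1) * G.minDegree ≤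
        (2 : ℝ) ^ (p - 1) * (2 * G.edgeFinset.card / (Fintype.card V)) ∧
      (2 : ℝ) ^ (p - 1) * (2 * G.edgeFinset.card / (Fintype.card V)) ≤ lamp G p ∧
      lamp G p ≤ (2 : ℝ) ^ (p - 1) * G.maxDegree) ∧
    (((2 : ℝ) ^ (p - 1) * G.minDegree =
        (2 : ℝ) ^ (p - 1) * (2 * G.edgeFinset.card / (Fintype.card V)) ∨
      (2 : ℝ) ^ (p - 1) * (2 * G.edgeFinset.card / (Fintype.card V)) = lamp G p ∨
      lamp G p = (2 : ℝ) ^ (p - 1) * G.maxDegree) ↔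
        ∃ d, G.IsRegularOfDegree d) := by
  have : Nonempty V := hc.nonempty
  have regular_of_lamp_eq_average
      (h : 2 ^ (p - 1) * (2 * #G.edgeFinset / Fintype.card V) = lamp G p) :
      ∃ d, G.IsRegularOfDegree d :=
    G.minDegree_eq_average_iff.1
      (G.minDegree_eq_average_of_forall_degree_eq (degree_eq_average_of_lamp_eq G hp h))
  refine ⟨⟨by gcongr; exact G.minDegree_le_average,
    two_rpow_mul_average_le_lamp G (by linarith),
    lamp_le_two_rpow_mul_maxDegree G hp.le⟩, ?_, ?_⟩
  · rintro (hmin | hmid | hmax)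
    · exact G.minDegree_eq_average_iff.1 (mul_left_cancel₀ (by positivity) hmin)
    · exact regular_of_lamp_eq_average hmid
    · exact regular_of_lamp_eq_average (lamp_eq_average_of_lamp_eq_maxDegree G hp hc hmax).symm
  · exact fun hreg => Or.inl (congrArg _ (G.minDegree_eq_average_iff.2 hreg))

theorem stmt_15 [Fintype V] [DecidableEq V] (G : SimpleGraph V) [DecidableRel G.Adj]
    (hc : G.Connected) (p : ℝ) (hp : 1 < p) :
    ((2 : ℝ) ^ (p - 1) * G.minDegree ≤
        (2 : ℝ) ^ (p - 1) * (2 * G.edgeFinset.card / (Fintype.card V)) ∧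
      (2 : ℝ) ^ (p - 1) * (2 * G.edgeFinset.card / (Fintype.card V)) ≤ lamp G p ∧
      lamp G p ≤ (2 : ℝ) ^ (p - 1) * G.maxDegree) ∧
    (((2 : ℝ) ^ (p - 1) * G.minDegree =
        (2 : ℝ) ^ (p - 1) * (2 * G.edgeFinset.card / (Fintype.card V)) ∨
      (2 : ℝ) ^ (p - 1) * (2 * G.edgeFinset.card / (Fintype.card V)) = lamp G p ∨
      lamp G p = (2 : ℝ) ^ (p - 1) * G.maxDegree) ↔
        ∃ d, G.IsRegularOfDegree d) :=
  stmt_15_general G hc p hp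
end
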